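/- arXiv:1811.11056 — 2 statements merged into one kernel-verified Lean document; each statement's English description precedes it below -/
import Mathlib

section
/- For every t ∈ ℝ, the first Frenet curvature of x satisfies κ₁(t) = √(a₁²α₁⁴ + a₂²α₂⁴) / (a₁²α₁² + a₂²α₂²). -/
open Real intervalIntegral

/-- The curve `x(t) = (a₁ cos(α₁ t), a₁ sin(α₁ t), a₂ cos(α₂ t), a₂ sin(α₂ t))` in `ℝ⁴`. -/
noncomputable def curveX (a₁ a₂ α₁ α₂ : ℝ) : ℝ → EuclideanSpace ℝ (Fin 4) :=
  fun t => (WithLp.equiv 2 (Fin 4 → ℝ)).symm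
    ![a₁ * Real.cos (α₁ * t), a₁ * Real.sin (α₁ * t),
      a₂ * Real.cos (α₂ * t), a₂ * Real.sin (α₂ * t)]

/-- `D_j(t)`: the determinant of the `j × j` Gram matrix whose `(a,b)` entry is the inner
product of the `a`-th and `b`-th derivatives of `y` at `t` (`1 ≤ a, b ≤ j`); `D₀ = 1`. -/
noncomputable def gramDet {n : ℕ} (y : ℝ → EuclideanSpace ℝ (Fin n)) (j : ℕ) (t : ℝ) : ℝ :=
  Matrix.det (Matrix.of fun a b : Fin j =>
    (inner ℝ (iteratedDeriv (a.val + 1) y t) (iteratedDeriv (b.val + 1) y t) : ℝ))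

/-- The `j`-th Frenet curvature `κ_j(t) = √(D_{j+1} D_{j-1}) / (D_j ‖y′(t)‖)` (for `j ≥ 1`). -/
noncomputable def frenetCurvature {n : ℕ} (y : ℝ → EuclideanSpace ℝ (Fin n)) (j : ℕ) (t : ℝ) :
    ℝ :=
  Real.sqrt (gramDet y (j + 1) t * gramDet y (j - 1) t) / (gramDet y j t * ‖deriv y t‖)

/-- The Plücker coordinates `w(t)` of the exterior product of `x′(t)` and `x″(t)`. -/
noncomputable def oscW (x : ℝ → EuclideanSpace ℝ (Fin 4)) (t : ℝ) : EuclideanSpace ℝ (Fin 6) :=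
  (WithLp.equiv 2 (Fin 6 → ℝ)).symm
    ![deriv x t 0 * deriv (deriv x) t 1 - deriv x t 1 * deriv (deriv x) t 0,
      deriv x t 0 * deriv (deriv x) t 2 - deriv x t 2 * deriv (deriv x) t 0,
      deriv x t 0 * deriv (deriv x) t 3 - deriv x t 3 * deriv (deriv x) t 0,
      deriv x t 1 * deriv (deriv x) t 2 - deriv x t 2 * deriv (deriv x) t 1,
      deriv x t 1 * deriv (deriv x) t 3 - deriv x t 3 * deriv (deriv x) t 1,
      deriv x t 2 * deriv (deriv x) t 3 - deriv x t 3 * deriv (deriv x) t 2]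

/-- The osculating indicatrix `x̃(t) = w(t) / ‖w(t)‖`. -/
noncomputable def oscInd (x : ℝ → EuclideanSpace ℝ (Fin 4)) (t : ℝ) :
    EuclideanSpace ℝ (Fin 6) :=
  ‖oscW x t‖⁻¹ • oscW x t

/-! For any curve, `D₁ = ‖y′‖²` and `D₂ = ‖y′‖²‖y″‖² - ⟪y′, y″⟫²`, so `κ₁ = ‖y″‖ / ‖y′‖²` as soon as
`y′ ⊥ y″`. For the given curve, `x″(t)` is minus the same kind of curve with amplitudes `aᵢαᵢ²`, and
`x′(t)` is orthogonal to every curve of that kind with the same frequencies, since in each plane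
it is the position vector turned by a right angle. -/

section Frenet

variable {n : ℕ} (y : ℝ → EuclideanSpace ℝ (Fin n)) (t : ℝ)

theorem gramDet_zero : gramDet y 0 t = 1 := Matrix.det_fin_zero

theorem gramDet_one : gramDet y 1 t = ‖deriv y t‖ ^ 2 := by
  rw [gramDet, Matrix.det_fin_one, Matrix.of_apply, Fin.val_zero, iteratedDeriv_one,
    real_inner_self_eq_norm_sq]

theorem gramDet_two : gramDet y 2 t =
    ‖deriv y t‖ ^ 2 * ‖deriv (deriv y) t‖ ^ 2 - inner ℝ (deriv y t) (deriv (deriv y) t) ^ 2 := by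
  rw [gramDet, Matrix.det_fin_two]
  simp only [Matrix.of_apply, Fin.val_zero, Fin.val_one, iteratedDeriv_succ, iteratedDeriv_zero,
    real_inner_self_eq_norm_sq, real_inner_comm (deriv y t)]
  ring

theorem frenetCurvature_one_of_inner_eq_zero
    (h : inner ℝ (deriv y t) (deriv (deriv y) t) = 0) :
    frenetCurvature y 1 t = ‖deriv (deriv y) t‖ / ‖deriv y t‖ ^ 2 := by
  rw [frenetCurvature, gramDet_two, gramDet_one, Nat.sub_self, gramDet_zero, h, mul_one,
    zero_pow two_ne_zero, sub_zero, ← mul_pow, Real.sqrt_sq (by positivity)]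
  rcases eq_or_ne ‖deriv y t‖ 0 with h0 | h0
  · simp [h0]
  · field_simp

end Frenet

theorem hasDerivAt_toLp {ι : Type*} [Fintype ι] {f : ℝ → ι → ℝ} {f' : ι → ℝ} {t : ℝ}
    (h : ∀ i, HasDerivAt (fun s => f s i) (f' i) t) :
    HasDerivAt (fun s => WithLp.toLp 2 (f s)) (WithLp.toLp 2 f') t :=
  (PiLp.continuousLinearEquiv 2 ℝ (fun _ : ι => ℝ)).symm.hasFDerivAt.comp_hasDerivAt t
    (hasDerivAt_pi.2 h)

theorem hasDerivAt_mul_cos_mul (a c t : ℝ) :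
    HasDerivAt (fun s => a * cos (c * s)) (-(a * c) * sin (c * t)) t := by
  refine ((((hasDerivAt_id' t).const_mul c).cos).const_mul a).congr_deriv ?_
  ring

theorem hasDerivAt_mul_sin_mul (a c t : ℝ) :
    HasDerivAt (fun s => a * sin (c * s)) (a * c * cos (c * t)) t := by
  refine ((((hasDerivAt_id' t).const_mul c).sin).const_mul a).congr_deriv ?_
  ring

section Curve

variable (a₁ a₂ α₁ α₂ : ℝ)

noncomputable def curveXVel (t : ℝ) : EuclideanSpace ℝ (Fin 4) :=
  WithLp.toLp 2 ![-(a₁ * α₁) * sin (α₁ * t), a₁ * α₁ * cos (α₁ * t),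
    -(a₂ * α₂) * sin (α₂ * t), a₂ * α₂ * cos (α₂ * t)]

theorem hasDerivAt_curveX (t : ℝ) :
    HasDerivAt (curveX a₁ a₂ α₁ α₂) (curveXVel a₁ a₂ α₁ α₂ t) t := by
  refine hasDerivAt_toLp fun i => ?_
  fin_cases i
  · exact hasDerivAt_mul_cos_mul a₁ α₁ t
  · exact hasDerivAt_mul_sin_mul a₁ α₁ t
  · exact hasDerivAt_mul_cos_mul a₂ α₂ t
  · exact hasDerivAt_mul_sin_mul a₂ α₂ t

theorem hasDerivAt_curveXVel (t : ℝ) :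
    HasDerivAt (curveXVel a₁ a₂ α₁ α₂) (-curveX (a₁ * α₁ ^ 2) (a₂ * α₂ ^ 2) α₁ α₂ t) t := by
  refine hasDerivAt_toLp fun i => ?_
  fin_cases i
  · exact (hasDerivAt_mul_sin_mul (-(a₁ * α₁)) α₁ t).congr_deriv (by simp [curveX, mul_assoc, sq])
  · exact (hasDerivAt_mul_cos_mul (a₁ * α₁) α₁ t).congr_deriv (by simp [curveX, mul_assoc, sq])
  · exact (hasDerivAt_mul_sin_mul (-(a₂ * α₂)) α₂ t).congr_deriv (by simp [curveX, mul_assoc, sq])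
  · exact (hasDerivAt_mul_cos_mul (a₂ * α₂) α₂ t).congr_deriv (by simp [curveX, mul_assoc, sq])

theorem deriv_curveX : deriv (curveX a₁ a₂ α₁ α₂) = curveXVel a₁ a₂ α₁ α₂ :=
  funext fun t => (hasDerivAt_curveX a₁ a₂ α₁ α₂ t).deriv

theorem norm_curveX_sq (t : ℝ) : ‖curveX a₁ a₂ α₁ α₂ t‖ ^ 2 = a₁ ^ 2 + a₂ ^ 2 := by
  simp only [curveX, WithLp.equiv_symm_apply, EuclideanSpace.real_norm_sq_eq, Fin.sum_univ_four,
    Matrix.cons_val_zero, Matrix.cons_val_one, Matrix.cons_val]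
  linear_combination a₁ ^ 2 * sin_sq_add_cos_sq (α₁ * t) + a₂ ^ 2 * sin_sq_add_cos_sq (α₂ * t)

theorem norm_curveXVel_sq (t : ℝ) :
    ‖curveXVel a₁ a₂ α₁ α₂ t‖ ^ 2 = (a₁ * α₁) ^ 2 + (a₂ * α₂) ^ 2 := by
  simp only [curveXVel, EuclideanSpace.real_norm_sq_eq, Fin.sum_univ_four,
    Matrix.cons_val_zero, Matrix.cons_val_one, Matrix.cons_val]
  linear_combination (a₁ * α₁) ^ 2 * sin_sq_add_cos_sq (α₁ * t) +
    (a₂ * α₂) ^ 2 * sin_sq_add_cos_sq (α₂ * t)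

theorem inner_curveXVel_curveX (b₁ b₂ t : ℝ) :
    inner ℝ (curveXVel a₁ a₂ α₁ α₂ t) (curveX b₁ b₂ α₁ α₂ t) = 0 := by
  simp only [curveXVel, curveX, WithLp.equiv_symm_apply, PiLp.inner_apply, RCLike.inner_apply,
    ringHom_apply, Fin.sum_univ_four, Matrix.cons_val_zero, Matrix.cons_val_one, Matrix.cons_val]
  ring

end Curve

theorem stmt3_general (a₁ a₂ α₁ α₂ : ℝ) :
    ∀ t : ℝ, frenetCurvature (curveX a₁ a₂ α₁ α₂) 1 t
      = Real.sqrt (a₁ ^ 2 * α₁ ^ 4 + a₂ ^ 2 * α₂ ^ 4) / (a₁ ^ 2 * α₁ ^ 2 + a₂ ^ 2 * α₂ ^ 2) := by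
  intro t
  have hacc : deriv (deriv (curveX a₁ a₂ α₁ α₂)) t =
      -curveX (a₁ * α₁ ^ 2) (a₂ * α₂ ^ 2) α₁ α₂ t := by
    rw [deriv_curveX]
    exact (hasDerivAt_curveXVel a₁ a₂ α₁ α₂ t).deriv
  have horth :
      inner ℝ (deriv (curveX a₁ a₂ α₁ α₂) t) (deriv (deriv (curveX a₁ a₂ α₁ α₂)) t) = 0 := by
    rw [hacc, deriv_curveX, inner_neg_right, inner_curveXVel_curveX, neg_zero]
  rw [frenetCurvature_one_of_inner_eq_zero _ _ horth, hacc, deriv_curveX, norm_neg,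
    ← Real.sqrt_sq (norm_nonneg _), norm_curveX_sq, norm_curveXVel_sq]
  congr 2 <;> ring

theorem stmt3 (a₁ a₂ α₁ α₂ : ℝ) (ha₁ : 0 < a₁) (ha₂ : 0 < a₂)
    (hα₁ : 0 < α₁) (hα₂ : 0 < α₂) (hne : α₁ ≠ α₂) :
    ∀ t : ℝ, frenetCurvature (curveX a₁ a₂ α₁ α₂) 1 t
      = Real.sqrt (a₁ ^ 2 * α₁ ^ 4 + a₂ ^ 2 * α₂ ^ 4) / (a₁ ^ 2 * α₁ ^ 2 + a₂ ^ 2 * α₂ ^ 2) :=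
  stmt3_general a₁ a₂ α₁ α₂
end

section
/- For every t ∈ ℝ, the second Frenet curvature of x satisfies κ₂(t) = a₁a₂α₁α₂·|α₁² − α₂²| / ((a₁²α₁² + a₂²α₂²)·√(a₁²α₁⁴ + a₂²α₂⁴)). -/
open Real intervalIntegral

/-! The `k`-th derivative of each circle `aᵢ (cos αᵢt, sin αᵢt)` is the same circle turned by
`k` quarter turns and scaled by `αᵢᵏ`, so the Gram entries are
`⟨x⁽ʲ⁾, x⁽ᵏ⁾⟩ = m_{j+k} cos ((j - k) π/2)` with `m_k = a₁² α₁ᵏ + a₂² α₂ᵏ`. Hence `D₁ = m₂`,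
`D₂ = m₂ m₄`, `D₃ = m₄ (m₂ m₆ - m₄²)`, and the Lagrange identity
`m₂ m₆ - m₄² = (a₁ a₂ α₁ α₂ (α₁² - α₂²))²` gives the formula. -/

lemma hasDerivAt_const_mul_cos (c α φ t : ℝ) :
    HasDerivAt (fun t => c * cos (α * t + φ)) (c * α * cos (α * t + (φ + π / 2))) t := by
  have hlin : HasDerivAt (fun t => α * t + φ) α t := by
    simpa using ((hasDerivAt_id t).const_mul α).add_const φ
  refine (hlin.cos.const_mul c).congr_deriv ?_
  rw [← add_assoc, cos_add_pi_div_two]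
  ring

lemma hasDerivAt_const_mul_sin (c α φ t : ℝ) :
    HasDerivAt (fun t => c * sin (α * t + φ)) (c * α * sin (α * t + (φ + π / 2))) t := by
  have hlin : HasDerivAt (fun t => α * t + φ) α t := by
    simpa using ((hasDerivAt_id t).const_mul α).add_const φ
  refine (hlin.sin.const_mul c).congr_deriv ?_
  rw [← add_assoc, sin_add_pi_div_two]
  ring

noncomputable def curveXIteratedDeriv (a₁ a₂ α₁ α₂ : ℝ) (k : ℕ) (t : ℝ) :
    EuclideanSpace ℝ (Fin 4) :=
  (WithLp.equiv 2 (Fin 4 → ℝ)).symm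
    ![a₁ * α₁ ^ k * cos (α₁ * t + k * (π / 2)), a₁ * α₁ ^ k * sin (α₁ * t + k * (π / 2)),
      a₂ * α₂ ^ k * cos (α₂ * t + k * (π / 2)), a₂ * α₂ ^ k * sin (α₂ * t + k * (π / 2))]

lemma hasDerivAt_curveXIteratedDeriv (a₁ a₂ α₁ α₂ : ℝ) (k : ℕ) (t : ℝ) :
    HasDerivAt (curveXIteratedDeriv a₁ a₂ α₁ α₂ k)
      (curveXIteratedDeriv a₁ a₂ α₁ α₂ (k + 1) t) t := by
  have hphase : ((k + 1 : ℕ) : ℝ) * (π / 2) = k * (π / 2) + π / 2 := by push_cast; ring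
  have hcoord : HasDerivAt (fun t => WithLp.equiv 2 _ (curveXIteratedDeriv a₁ a₂ α₁ α₂ k t))
      (WithLp.equiv 2 _ (curveXIteratedDeriv a₁ a₂ α₁ α₂ (k + 1) t)) t := by
    simp only [curveXIteratedDeriv, Equiv.apply_symm_apply, hphase, pow_succ, mul_assoc]
    rw [hasDerivAt_pi]
    intro i
    fin_cases i
    · simpa [mul_assoc] using hasDerivAt_const_mul_cos (a₁ * α₁ ^ k) α₁ (k * (π / 2)) t
    · simpa [mul_assoc] using hasDerivAt_const_mul_sin (a₁ * α₁ ^ k) α₁ (k * (π / 2)) t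
    · simpa [mul_assoc] using hasDerivAt_const_mul_cos (a₂ * α₂ ^ k) α₂ (k * (π / 2)) t
    · simpa [mul_assoc] using hasDerivAt_const_mul_sin (a₂ * α₂ ^ k) α₂ (k * (π / 2)) t
  exact (EuclideanSpace.equiv (Fin 4) ℝ).symm.hasFDerivAt.comp_hasDerivAt t hcoord

lemma iteratedDeriv_curveX (a₁ a₂ α₁ α₂ : ℝ) (k : ℕ) :
    iteratedDeriv k (curveX a₁ a₂ α₁ α₂) = curveXIteratedDeriv a₁ a₂ α₁ α₂ k := by
  induction k with
  | zero => funext t; simp [curveX, curveXIteratedDeriv]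
  | succ k ih =>
    rw [iteratedDeriv_succ, ih]
    exact funext fun t => (hasDerivAt_curveXIteratedDeriv a₁ a₂ α₁ α₂ k t).deriv

lemma inner_iteratedDeriv_curveX (a₁ a₂ α₁ α₂ : ℝ) (j k : ℕ) (t : ℝ) :
    inner ℝ (iteratedDeriv j (curveX a₁ a₂ α₁ α₂) t) (iteratedDeriv k (curveX a₁ a₂ α₁ α₂) t)
      = (a₁ ^ 2 * α₁ ^ (j + k) + a₂ ^ 2 * α₂ ^ (j + k)) * cos ((j - k : ℝ) * (π / 2)) := by
  have hcos (α : ℝ) : cos ((j - k : ℝ) * (π / 2))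
      = cos (α * t + j * (π / 2)) * cos (α * t + k * (π / 2))
        + sin (α * t + j * (π / 2)) * sin (α * t + k * (π / 2)) := by
    rw [← cos_sub]
    ring_nf
  simp only [iteratedDeriv_curveX, curveXIteratedDeriv, PiLp.inner_apply, RCLike.inner_apply,
    conj_trivial, Fin.sum_univ_four, WithLp.equiv_symm_apply,
    Matrix.cons_val_zero, Matrix.cons_val_one, Matrix.cons_val_two, Matrix.cons_val_three,
    Matrix.head_cons, Matrix.tail_cons]
  linear_combination (-(a₁ ^ 2 * α₁ ^ (j + k))) * hcos α₁ - a₂ ^ 2 * α₂ ^ (j + k) * hcos α₂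

lemma gramDet_one_eq_norm_sq {n : ℕ} (y : ℝ → EuclideanSpace ℝ (Fin n)) (t : ℝ) :
    gramDet y 1 t = ‖deriv y t‖ ^ 2 := by
  simp [gramDet]

lemma frenetCurvature_two_eq {n : ℕ} (y : ℝ → EuclideanSpace ℝ (Fin n)) (t : ℝ) {P Q K : ℝ}
    (hP : 0 < P) (hQ : 0 < Q) (hK : 0 ≤ K) (h₁ : gramDet y 1 t = P)
    (h₂ : gramDet y 2 t = P * Q) (h₃ : gramDet y 3 t = Q * K ^ 2) :
    frenetCurvature y 2 t = K / (P * √Q) := by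
  have hnorm : ‖deriv y t‖ = √P := by
    rw [← h₁, gramDet_one_eq_norm_sq, sqrt_sq (norm_nonneg _)]
  have hsqrt : √(Q * K ^ 2 * P) = √Q * K * √P := by
    rw [sqrt_mul (by positivity), sqrt_mul hQ.le, sqrt_sq hK]
  rw [frenetCurvature, hnorm, h₁, h₂, h₃, hsqrt]
  field_simp
  rw [sq_sqrt hQ.le]
  ring

section GramDeterminants

variable (a₁ a₂ α₁ α₂ t : ℝ)

lemma gramDet_curveX_one :
    gramDet (curveX a₁ a₂ α₁ α₂) 1 t = a₁ ^ 2 * α₁ ^ 2 + a₂ ^ 2 * α₂ ^ 2 := by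
  simp only [gramDet, Matrix.det_fin_one, Matrix.of_apply, inner_iteratedDeriv_curveX]
  norm_num

lemma gramDet_curveX_two :
    gramDet (curveX a₁ a₂ α₁ α₂) 2 t
      = (a₁ ^ 2 * α₁ ^ 2 + a₂ ^ 2 * α₂ ^ 2) * (a₁ ^ 2 * α₁ ^ 4 + a₂ ^ 2 * α₂ ^ 4) := by
  simp only [gramDet, Matrix.det_fin_two, Matrix.of_apply, inner_iteratedDeriv_curveX]
  norm_num

lemma gramDet_curveX_three :
    gramDet (curveX a₁ a₂ α₁ α₂) 3 t
      = (a₁ ^ 2 * α₁ ^ 4 + a₂ ^ 2 * α₂ ^ 4) * (a₁ * a₂ * α₁ * α₂ * (α₁ ^ 2 - α₂ ^ 2)) ^ 2 := by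
  simp only [gramDet, Matrix.det_fin_three, Matrix.of_apply, inner_iteratedDeriv_curveX]
  norm_num
  rw [show (2 : ℝ) * (π / 2) = π by ring, cos_pi]
  ring

end GramDeterminants

theorem stmt4_general (a₁ a₂ α₁ α₂ : ℝ) (ha₁ : 0 < a₁) (ha₂ : 0 < a₂)
    (hα₁ : 0 < α₁) (hα₂ : 0 < α₂) :
    ∀ t : ℝ, frenetCurvature (curveX a₁ a₂ α₁ α₂) 2 t
      = a₁ * a₂ * α₁ * α₂ * |α₁ ^ 2 - α₂ ^ 2|
        / ((a₁ ^ 2 * α₁ ^ 2 + a₂ ^ 2 * α₂ ^ 2) * Real.sqrt (a₁ ^ 2 * α₁ ^ 4 + a₂ ^ 2 * α₂ ^ 4)) := by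
  intro t
  refine frenetCurvature_two_eq _ t (by positivity) (by positivity) (by positivity)
    (gramDet_curveX_one a₁ a₂ α₁ α₂ t) (gramDet_curveX_two a₁ a₂ α₁ α₂ t) ?_
  rw [gramDet_curveX_three, mul_pow _ |_|, sq_abs, ← mul_pow]

theorem stmt4 (a₁ a₂ α₁ α₂ : ℝ) (ha₁ : 0 < a₁) (ha₂ : 0 < a₂)
    (hα₁ : 0 < α₁) (hα₂ : 0 < α₂) (hne : α₁ ≠ α₂) :
    ∀ t : ℝ, frenetCurvature (curveX a₁ a₂ α₁ α₂) 2 t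
      = a₁ * a₂ * α₁ * α₂ * |α₁ ^ 2 - α₂ ^ 2|
        / ((a₁ ^ 2 * α₁ ^ 2 + a₂ ^ 2 * α₂ ^ 2) * Real.sqrt (a₁ ^ 2 * α₁ ^ 4 + a₂ ^ 2 * α₂ ^ 4)) :=
  stmt4_general a₁ a₂ α₁ α₂ ha₁ ha₂ hα₁ hα₂
end
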